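/- Suppose a sequence of K+1 reach-avoid segments is verified: for each k, starting from initial set S_k, the reachable sets under controller μ_k satisfy R_t(S_k) ⊆ A_k for all t < H_k and R_{H_k}(S_k) ⊆ S_{k+1}, where S_{k+1} is the initial set of the next segment. Then every trajectory x_0, x_1, ..., x_F (with F = H_0 + ... + H_K) generated by applying μ_0 for H_0 steps, then μ_1 for H_1 steps, etc., from any x_0 ∈ S_0, satisfies: within the k-th segment the state stays in A_k, and at each segment boundary the state lies in S_{k+1}. -/
import Mathlib


/-- Composition of verified reach-avoid segments. For each segment `k ∈ {0,...,K}` with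
closed-loop dynamics `f k`, horizon `H k ≥ 1`, stay set `A k`, initial set `S k`, and
reachable sets `R k` defined by iterated images of `f k`, suppose the segment is verified:
`R k t (S k) ⊆ A k` for all `t < H k` and `R k (H k) (S k) ⊆ S (k+1)`.
Then every trajectory `x` starting in `S 0` that applies `f k` during the time window
`[tstart k, tstart k + H k)` (where `tstart k = H 0 + ⋯ + H (k-1)`) stays in `A k` within
segment `k` and lies in `S (k+1)` at the segment boundary `tstart (k+1)`. -/
theorem stmt_5 {X : Type*} (K : ℕ) (f : ℕ → X → X) (H : ℕ → ℕ) (A S : ℕ → Set X)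
    (R : ℕ → ℕ → Set X → Set X)
    (hR0 : ∀ k (T : Set X), R k 0 T = T)
    (hRs : ∀ k t (T : Set X), R k (t + 1) T = f k '' R k t T)
    (hH : ∀ k ≤ K, 1 ≤ H k)
    (tstart : ℕ → ℕ) (htstart : ∀ k, tstart k = ∑ i ∈ Finset.range k, H i)
    (hstay : ∀ k ≤ K, ∀ t < H k, R k t (S k) ⊆ A k)
    (hreach : ∀ k ≤ K, R k (H k) (S k) ⊆ S (k + 1))
    (x : ℕ → X) (hx0 : x 0 ∈ S 0)
    (hdyn : ∀ k ≤ K, ∀ t, tstart k ≤ t → t < tstart k + H k → x (t + 1) = f k (x t)) :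
    ∀ k ≤ K, (∀ t, tstart k ≤ t → t < tstart k + H k → x t ∈ A k) ∧
      x (tstart (k + 1)) ∈ S (k + 1) := by
  have hsucc : ∀ k, tstart (k + 1) = tstart k + H k := by
    intro k
    rw [htstart, htstart, Finset.sum_range_succ]
  -- within segment: reachability
  have hseg : ∀ k ≤ K, x (tstart k) ∈ S k →
      ∀ t ≤ H k, x (tstart k + t) ∈ R k t (S k) := by
    intro k hk hstart t
    induction t with
    | zero => intro _; simpa [hR0] using hstart
    | succ t ih =>
      intro ht
      rw [hRs]
      have h1 : x (tstart k + t + 1) = f k (x (tstart k + t)) :=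
        hdyn k hk _ (Nat.le_add_right _ _) (by omega)
      have := ih (by omega)
      rw [show tstart k + (t + 1) = tstart k + t + 1 by omega, h1]
      exact ⟨_, this, rfl⟩
  have hinit : ∀ k ≤ K, x (tstart k) ∈ S k := by
    intro k
    induction k with
    | zero =>
      intro _
      have : tstart 0 = 0 := by simp [htstart]
      rwa [this]
    | succ k ih =>
      intro hk
      have hk' : k ≤ K := by omega
      have := hseg k hk' (ih hk') (H k) le_rfl
      rw [hsucc]
      exact hreach k hk' this
  intro k hk
  constructor
  · intro t h1 h2
    have : x (tstart k + (t - tstart k)) ∈ R k (t - tstart k) (S k) :=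
      hseg k hk (hinit k hk) _ (by omega)
    rw [show tstart k + (t - tstart k) = t by omega] at this
    exact hstay k hk _ (by omega) this
  · rw [hsucc]
    exact hreach k hk (hseg k hk (hinit k hk) (H k) le_rfl)
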